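/- arXiv:2512.23810 — 2 statements merged into one kernel-verified Lean document; each statement's English description precedes it below -/
import Mathlib

section
/- Let S be a nonempty finite set partitioned into nonempty blocks S_1, …, S_K, let (p_s)_{s∈S} be a probability vector with block probabilities P_k = ∑_{s∈S_k} p_s > 0 and block means ε̄_k = P_k⁻¹ ∑_{s∈S_k} p_s ε_s, where ε_s ∈ [0,1]. Let f : ℝ → ℝ be positive on [0,1] with x ↦ 1/f(x) convex on [0,1]. Then (∑_{s∈S} p_s f(ε_s)⁻¹)⁻¹ ≤ (∑_{k=1}^K P_k f(ε̄_k)⁻¹)⁻¹. -/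
open Classical

/-- Corollary 1, coarse-graining: for a partition of `S` given by the block
assignment `B : S → K` (blocks nonempty since the block probabilities `P k` are positive),
coarse-graining can only increase the harmonic-expectation shot overhead:
`(∑ s, p s * (f (ε s))⁻¹)⁻¹ ≤ (∑ k, P k * (f (ε̄ k))⁻¹)⁻¹`, where `ε̄ k` is the block mean. -/
theorem fine_grained_le_coarse_grained_overhead
    {S K : Type*} [Fintype S] [Nonempty S] [Fintype K] [Nonempty K]
    (B : S → K) (p ε : S → ℝ) (f : ℝ → ℝ)
    (hp : ∀ s, 0 ≤ p s) (hsum : ∑ s, p s = 1)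
    (hε : ∀ s, ε s ∈ Set.Icc (0 : ℝ) 1)
    (hfpos : ∀ x ∈ Set.Icc (0 : ℝ) 1, 0 < f x)
    (hconv : ConvexOn ℝ (Set.Icc (0 : ℝ) 1) (fun x => (f x)⁻¹))
    (P : K → ℝ) (hP : ∀ k, P k = ∑ s ∈ Finset.univ.filter (fun s => B s = k), p s)
    (hPpos : ∀ k, 0 < P k)
    (εbar : K → ℝ)
    (hεbar : ∀ k, εbar k =
      (P k)⁻¹ * ∑ s ∈ Finset.univ.filter (fun s => B s = k), p s * ε s) :
    (∑ s, p s * (f (ε s))⁻¹)⁻¹ ≤ (∑ k, P k * (f (εbar k))⁻¹)⁻¹ := by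
  -- per-block Jensen inequality
  have key : ∀ k, P k * (f (εbar k))⁻¹ ≤
      ∑ s ∈ Finset.univ.filter (fun s => B s = k), p s * (f (ε s))⁻¹ := by
    intro k
    set t := Finset.univ.filter (fun s => B s = k) with ht
    have hw0 : ∀ s ∈ t, 0 ≤ p s / P k := fun s _ =>
      div_nonneg (hp s) (hPpos k).le
    have hw1 : ∑ s ∈ t, p s / P k = 1 := by
      rw [← Finset.sum_div, ← hP k, div_self (hPpos k).ne']
    have hmem : ∀ s ∈ t, ε s ∈ Set.Icc (0 : ℝ) 1 := fun s _ => hε s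
    have hbar : εbar k = ∑ s ∈ t, (p s / P k) • ε s := by
      rw [hεbar k, Finset.mul_sum]
      refine Finset.sum_congr rfl fun s _ => ?_
      simp only [smul_eq_mul, div_eq_inv_mul]
      ring
    have hjensen := hconv.map_sum_le hw0 hw1 hmem
    rw [← hbar] at hjensen
    have : P k * (f (εbar k))⁻¹ ≤ P k * ∑ s ∈ t, (p s / P k) • (f (ε s))⁻¹ :=
      mul_le_mul_of_nonneg_left hjensen (hPpos k).le
    calc P k * (f (εbar k))⁻¹ ≤ P k * ∑ s ∈ t, (p s / P k) • (f (ε s))⁻¹ := this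
      _ = ∑ s ∈ t, p s * (f (ε s))⁻¹ := by
          rw [Finset.mul_sum]
          refine Finset.sum_congr rfl fun s _ => ?_
          rw [smul_eq_mul, ← mul_assoc, mul_comm (P k) (p s / P k),
            div_mul_cancel₀ _ (hPpos k).ne']
  have hsplit : (∑ s, p s * (f (ε s))⁻¹) =
      ∑ k, ∑ s ∈ Finset.univ.filter (fun s => B s = k), p s * (f (ε s))⁻¹ :=
    (Finset.sum_fiberwise Finset.univ B (fun s => p s * (f (ε s))⁻¹)).symm
  have hcoarse_le : (∑ k, P k * (f (εbar k))⁻¹) ≤ ∑ s, p s * (f (ε s))⁻¹ := by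
    rw [hsplit]; exact Finset.sum_le_sum fun k _ => key k
  have hcpos : 0 < ∑ k, P k * (f (εbar k))⁻¹ := by
    have hbarmem : ∀ k, εbar k ∈ Set.Icc (0 : ℝ) 1 := by
      intro k
      set t := Finset.univ.filter (fun s => B s = k) with ht
      have hbar : εbar k = ∑ s ∈ t, (p s / P k) • ε s := by
        rw [hεbar k, Finset.mul_sum]
        refine Finset.sum_congr rfl fun s _ => ?_
        simp only [smul_eq_mul, div_eq_inv_mul]
        ring
      rw [hbar]
      refine (convex_Icc (0:ℝ) 1).sum_mem (fun s _ => div_nonneg (hp s) (hPpos k).le)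
        ?_ (fun s _ => hε s)
      rw [← Finset.sum_div, ← hP k, div_self (hPpos k).ne']
    refine Finset.sum_pos (fun k _ => mul_pos (hPpos k)
      (inv_pos.mpr (hfpos _ (hbarmem k)))) Finset.univ_nonempty
  exact one_div (∑ s, p s * (f (ε s))⁻¹) ▸ one_div (∑ k, P k * (f (εbar k))⁻¹) ▸
    one_div_le_one_div_of_le hcpos hcoarse_le
end

section
/- Fix p ∈ [0,1] and e ∈ (0,1]. For ε > 0 define p₁(ε) = p·ε/e, ε₀(ε) = ε·(1−p)/(1−p₁(ε)), and G(ε) = (1−p₁(ε))·(1−4ε₀(ε)) + p₁(ε)·(1−2e)². Then lim_{ε→0⁺} (−log G(ε))/ε = 4(1−p·e). -/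
open Filter Topology

/-! The factor `1 - p₁(ε)` cancels against the denominator of `ε₀(ε)`, and the two terms
linear in `p` then cancel as well, so `G(ε) = 1 - 4 (1 - p e) ε` exactly once `p₁(ε) ≠ 1`.
Hence `-log G(ε) / ε` is a difference quotient at `0` of `x ↦ -log (1 - c x)`, whose
derivative there is `c = 4 (1 - p e)`. -/

theorem Real.tendsto_neg_log_one_sub_mul_div (c : ℝ) :
    Tendsto (fun x : ℝ => -Real.log (1 - c * x) / x) (𝓝[≠] 0) (𝓝 c) := by
  have hderiv : HasDerivAt (fun x : ℝ => -Real.log (1 - c * x)) c 0 := by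
    simpa [Pi.neg_def] using
      (((hasDerivAt_id (0 : ℝ)).const_mul c).const_sub 1).log (by simp) |>.neg
  simpa [div_eq_inv_mul] using hderiv.tendsto_slope_zero

theorem binary_cg_gain_eq {p e ε : ℝ} (he : e ≠ 0) (hgood : 1 - p * ε / e ≠ 0) :
    (1 - p * ε / e) * (1 - 4 * (ε * (1 - p) / (1 - p * ε / e))) + p * ε / e * (1 - 2 * e) ^ 2
      = 1 - 4 * (1 - p * e) * ε := by
  rw [mul_sub, mul_one, mul_left_comm, mul_div_cancel₀ _ hgood]
  field_simp
  ring

theorem eventually_one_sub_mul_div_ne_zero (p e : ℝ) :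
    ∀ᶠ ε in 𝓝 (0 : ℝ), 1 - p * ε / e ≠ 0 := by
  have hcont : Continuous fun ε : ℝ => 1 - p * ε / e := by fun_prop
  exact (hcont.tendsto 0).eventually_ne (by simp)

theorem binary_cg_salem_single_pauli_blowup_rate_general
    (p e : ℝ) (he : e ∈ Set.Ioc (0 : ℝ) 1) :
    Tendsto
      (fun ε : ℝ =>
        (-Real.log ((1 - p * ε / e) * (1 - 4 * (ε * (1 - p) / (1 - p * ε / e)))
          + (p * ε / e) * (1 - 2 * e) ^ 2)) / ε)
      (nhdsWithin 0 (Set.Ioi 0))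
      (nhds (4 * (1 - p * e))) := by
  have hlim := (Real.tendsto_neg_log_one_sub_mul_div (4 * (1 - p * e))).mono_left
    (nhdsWithin_mono 0 fun _ hx => ne_of_gt hx)
  refine hlim.congr' ?_
  filter_upwards [nhdsWithin_le_nhds (eventually_one_sub_mul_div_ne_zero p e)] with ε hgood
  rw [binary_cg_gain_eq he.1.ne' hgood]

/-- blowup rate for the single-Pauli-error example: with `p₁(ε) = p*ε/e`,
`ε₀(ε) = ε*(1-p)/(1-p₁(ε))` and `G(ε) = (1-p₁(ε))*(1-4*ε₀(ε)) + p₁(ε)*(1-2e)^2`,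
one has `lim_{ε→0⁺} (-log G(ε))/ε = 4*(1 - p*e)`. -/
theorem binary_cg_salem_single_pauli_blowup_rate
    (p e : ℝ) (hp : p ∈ Set.Icc (0 : ℝ) 1) (he : e ∈ Set.Ioc (0 : ℝ) 1) :
    Tendsto
      (fun ε : ℝ =>
        (-Real.log ((1 - p * ε / e) * (1 - 4 * (ε * (1 - p) / (1 - p * ε / e)))
          + (p * ε / e) * (1 - 2 * e) ^ 2)) / ε)
      (nhdsWithin 0 (Set.Ioi 0))
      (nhds (4 * (1 - p * e))) :=
  binary_cg_salem_single_pauli_blowup_rate_general p e he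
end
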